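/- Suppose the term rank of 𝒜 equals n (equivalently, the digraph 𝒢 of 𝒜 contains a family of pairwise node-disjoint cycles spanning all state nodes). Then an output pattern ℋ ∈ {0,1}^{p×n} with exactly one entry equal to 1 in each row makes the pair (𝒜, ℋ) structurally observable if and only if every parent SCC of 𝒢 contains a measured state; consequently, the minimum number of such measurement rows for which (𝒜, ℋ) is structurally observable equals the number of parent SCCs of 𝒢. -/

import Mathlib

open Matrix

/-- Edge relation of the digraph of a pattern matrix: edge from `x_j` to `x_i` iff `𝒜 i j = 1`. -/
def digraphRel {n : ℕ} (𝒜 : Matrix (Fin n) (Fin n) Bool) : Fin n → Fin n → Prop :=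
  fun j i => 𝒜 i j = true

/-- A state `j` is measured iff some row of the output pattern has a `1` in column `j`. -/
def Measured {n : ℕ} {ρ : Type*} (ℋ : Matrix ρ (Fin n) Bool) (j : Fin n) : Prop :=
  ∃ i, ℋ i j = true

/-- A state node is Y-connected: a directed path to a measured state. -/
def YConnected {n : ℕ} {ρ : Type*} (𝒜 : Matrix (Fin n) (Fin n) Bool)
    (ℋ : Matrix ρ (Fin n) Bool) (x : Fin n) : Prop :=
  ∃ x', Relation.ReflTransGen (digraphRel 𝒜) x x' ∧ Measured ℋ x'

/-- Observability matrix stacking `H, HA, …, HA^(n-1)`. -/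
noncomputable def obsMatrix {n : ℕ} {ρ : Type*} (A : Matrix (Fin n) (Fin n) ℝ)
    (H : Matrix ρ (Fin n) ℝ) : Matrix (Fin n × ρ) (Fin n) ℝ :=
  Matrix.of fun p j => (H * A ^ (p.1 : ℕ)) p.2 j

/-- Structural observability of a pair of patterns. -/
def StructurallyObservable {n : ℕ} {ρ : Type*} (𝒜 : Matrix (Fin n) (Fin n) Bool)
    (ℋ : Matrix ρ (Fin n) Bool) : Prop :=
  ∃ (A : Matrix (Fin n) (Fin n) ℝ) (H : Matrix ρ (Fin n) ℝ),
    (∀ i j, 𝒜 i j = false → A i j = 0) ∧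
    (∀ i j, ℋ i j = false → H i j = 0) ∧
    (obsMatrix A H).rank = n

/-- Mutual reachability. -/
def SameSCC {V : Type*} (E : V → V → Prop) (u v : V) : Prop :=
  Relation.ReflTransGen E u v ∧ Relation.ReflTransGen E v u

/-- Strongly connected component: a nonempty, mutually reachable, maximal node set. -/
def IsSCC {V : Type*} (E : V → V → Prop) (S : Set V) : Prop :=
  S.Nonempty ∧ (∀ u ∈ S, ∀ v ∈ S, SameSCC E u v) ∧
    ∀ u v, v ∈ S → SameSCC E u v → u ∈ S

/-- Parent SCC: an SCC with no outgoing edge. -/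
def IsParentSCC {V : Type*} (E : V → V → Prop) (S : Set V) : Prop :=
  IsSCC E S ∧ ∀ u ∈ S, ∀ v, E u v → v ∈ S

/-- A matching of the bipartite graph of `𝒜`: edges `(left column j, right row i)`
with `𝒜 i j = 1`, no two sharing an endpoint. -/
def IsMatching {n : ℕ} (𝒜 : Matrix (Fin n) (Fin n) Bool)
    (M : Finset (Fin n × Fin n)) : Prop :=
  (∀ e ∈ M, 𝒜 e.2 e.1 = true) ∧
    ∀ e ∈ M, ∀ f ∈ M, e ≠ f → e.1 ≠ f.1 ∧ e.2 ≠ f.2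

/-- Maximum matching of the bipartite graph of `𝒜`. -/
def IsMaxMatching {n : ℕ} (𝒜 : Matrix (Fin n) (Fin n) Bool)
    (M : Finset (Fin n × Fin n)) : Prop :=
  IsMatching 𝒜 M ∧ ∀ M', IsMatching 𝒜 M' → M'.card ≤ M.card

/-- A left node `v` is unmatched by `M`. -/
def UnmatchedLeft {n : ℕ} (M : Finset (Fin n × Fin n)) (v : Fin n) : Prop :=
  ∀ e ∈ M, e.1 ≠ v

/-- One alternating step between left nodes: a non-matching edge from `u` to a right
node `r` followed by the matching edge from `r` back to a left node `w`. -/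
def AltStep {n : ℕ} (𝒜 : Matrix (Fin n) (Fin n) Bool) (M : Finset (Fin n × Fin n))
    (u w : Fin n) : Prop :=
  ∃ r : Fin n, 𝒜 r u = true ∧ (u, r) ∉ M ∧ (w, r) ∈ M

/-- The contraction associated with an unmatched left node `v`: all left nodes
reachable from `v` by `M`-alternating paths (including `v`). -/
def contractionOf {n : ℕ} (𝒜 : Matrix (Fin n) (Fin n) Bool)
    (M : Finset (Fin n × Fin n)) (v : Fin n) : Set (Fin n) :=
  {u | Relation.ReflTransGen (AltStep 𝒜 M) v u}

/-- Term rank of a pattern: the maximum number of `1`-entries, no two in the same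
row or column. -/
noncomputable def termRank {m n : Type*} [Fintype m] [Fintype n]
    (A : Matrix m n Bool) : ℕ :=
  sSup {k : ℕ | ∃ (r : Fin k → m) (c : Fin k → n),
    Function.Injective r ∧ Function.Injective c ∧ ∀ i, A (r i) (c i) = true}

/-- A cycle of the digraph of `𝒜`, as a nonempty duplicate-free list of state nodes. -/
def IsCycleList {n : ℕ} (𝒜 : Matrix (Fin n) (Fin n) Bool) (c : List (Fin n)) : Prop :=
  c ≠ [] ∧ c.Nodup ∧ c.Chain' (digraphRel 𝒜) ∧
    ∀ a ∈ c.head?, ∀ b ∈ c.getLast?, digraphRel 𝒜 b a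

/-- A directed path of the system digraph through state nodes `c` ending at the
output node `y`. -/
def IsYPathTo {n p : ℕ} (𝒜 : Matrix (Fin n) (Fin n) Bool) (ℋ : Matrix (Fin p) (Fin n) Bool)
    (c : List (Fin n)) (y : Fin p) : Prop :=
  c ≠ [] ∧ c.Nodup ∧ c.Chain' (digraphRel 𝒜) ∧ ∀ b ∈ c.getLast?, ℋ y b = true

/-- A family of pairwise node-disjoint cycles of `𝒢` and output-terminated paths of
`𝒢_sys` whose union covers every state node. Each family member is a list of state
nodes together with (for paths) the terminal output node. -/
def DisjointSpanningFamily {n p : ℕ} (𝒜 : Matrix (Fin n) (Fin n) Bool)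
    (ℋ : Matrix (Fin p) (Fin n) Bool) : Prop :=
  ∃ F : Finset (List (Fin n) × Option (Fin p)),
    (∀ e ∈ F, (e.2 = none ∧ IsCycleList 𝒜 e.1) ∨ ∃ y, e.2 = some y ∧ IsYPathTo 𝒜 ℋ e.1 y) ∧
    (∀ e ∈ F, ∀ f ∈ F, e ≠ f →
      (∀ x ∈ e.1, x ∉ f.1) ∧ ∀ y : Fin p, e.2 = some y → f.2 ≠ some y) ∧
    ∀ x : Fin n, ∃ e ∈ F, x ∈ e.1

/-!
If a parent SCC contains no measured state, no edge leaves it, so every row of `H A^k` vanishes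
on its columns and the observability matrix has a nonzero kernel vector.

Conversely, term rank `n` gives a permutation `σ` with `𝒜 (σ j) j = 1`, i.e. disjoint cycles of
`𝒢` covering all states. Give each cycle of `σ` its own positive weight, and let every cycle
without a measured state send one edge of `𝒢` to a cycle strictly closer to the measured states.
For the resulting matrix, an eigenvector with eigenvalue `μ` can be nonzero on a cycle receiving
no input only if that cycle has weight `‖μ‖`; so the eigenvector starts on that one cycle and is
carried along the links, vanishing nowhere on each cycle it reaches, down to a cycle containing a
measured state. Every eigenvector is therefore seen by `H`, which is the Popov–Belevitch–Hautus
criterion for observability.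
-/

namespace Equiv.Perm

variable {α K : Type*} [Field K] {σ : Perm α} {v : α → K} {μ w s : K} {t : α}

theorem minimalPeriod_pos [Finite α] (σ : Perm α) (t : α) : 0 < Function.minimalPeriod σ t :=
  Function.minimalPeriod_pos_of_mem_periodicPts (σ.injective.mem_periodicPts t)

theorem SameCycle.exists_pow_lt_minimalPeriod [Finite α] {i : α} (h : σ.SameCycle t i) :
    ∃ k < Function.minimalPeriod σ t, (σ ^ k) t = i := by
  obtain ⟨k, -, rfl⟩ := h.exists_pow_eq'
  exact ⟨k % Function.minimalPeriod σ t, Nat.mod_lt _ (σ.minimalPeriod_pos t), by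
    simp only [coe_pow, Function.iterate_mod_minimalPeriod_eq]⟩

theorem pow_mul_apply_pow_eq_of_lt_minimalPeriod
    (hrel : ∀ i, σ.SameCycle t i → i ≠ t → μ * v i = w * v (σ⁻¹ i)) {k : ℕ}
    (hk : k < Function.minimalPeriod σ t) :
    μ ^ k * v ((σ ^ k) t) = w ^ k * v t := by
  induction k with
  | zero => simp
  | succ k ih =>
    have hne : (σ ^ (k + 1)) t ≠ t := by
      rw [coe_pow]
      exact Function.not_isPeriodicPt_of_pos_of_lt_minimalPeriod k.succ_ne_zero hk
    have hstep := hrel _ (sameCycle_pow_right.mpr (SameCycle.refl σ t)) hne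
    rw [pow_succ', mul_apply, coe_inv, symm_apply_apply] at hstep
    rw [pow_succ' σ, mul_apply]
    linear_combination μ ^ k * hstep + w * ih (by omega)

theorem apply_ne_zero_of_sameCycle [Finite α]
    (hrel : ∀ i, σ.SameCycle t i → i ≠ t → μ * v i = w * v (σ⁻¹ i)) (hw : w ≠ 0) (ht : v t ≠ 0)
    {i : α} (hi : σ.SameCycle t i) : v i ≠ 0 := by
  obtain ⟨k, hk, rfl⟩ := hi.exists_pow_lt_minimalPeriod
  intro h0
  have := pow_mul_apply_pow_eq_of_lt_minimalPeriod hrel hk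
  rw [h0, mul_zero] at this
  exact mul_ne_zero (pow_ne_zero k hw) ht this.symm

theorem pow_sub_pow_mul_apply_eq [Finite α]
    (hrel : ∀ i, σ.SameCycle t i → i ≠ t → μ * v i = w * v (σ⁻¹ i))
    (ht : μ * v t = w * v (σ⁻¹ t) + s) :
    (μ ^ Function.minimalPeriod σ t - w ^ Function.minimalPeriod σ t) * v t =
      μ ^ (Function.minimalPeriod σ t - 1) * s := by
  obtain ⟨c, hc⟩ := Nat.exists_eq_add_one_of_ne_zero (σ.minimalPeriod_pos t).ne'
  have hback : (σ ^ c) t = σ⁻¹ t := by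
    rw [eq_inv_iff_eq, ← mul_apply, ← pow_succ', coe_pow, ← hc, Function.iterate_minimalPeriod]
  have hchain := pow_mul_apply_pow_eq_of_lt_minimalPeriod hrel (k := c) (by omega)
  rw [hback] at hchain
  rw [hc, Nat.add_sub_cancel]
  linear_combination μ ^ c * ht + w * hchain

section CycleClass

variable {V : Type*} (σ : Perm V)

abbrev Cycles : Type _ := Quotient (SameCycle.setoid σ)

def cycleClass (x : V) : σ.Cycles := Quotient.mk _ x

variable {σ}

theorem cycleClass_eq_cycleClass {x y : V} : σ.cycleClass x = σ.cycleClass y ↔ σ.SameCycle x y :=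
  Quotient.eq

@[simp]
theorem cycleClass_inv_apply (x : V) : σ.cycleClass (σ⁻¹ x) = σ.cycleClass x :=
  cycleClass_eq_cycleClass.2 (sameCycle_symm_apply_left.2 (SameCycle.refl σ x))

def IsActive {K : Type*} [Zero K] (v : V → K) (O : σ.Cycles) : Prop :=
  ∃ y, σ.cycleClass y = O ∧ v y ≠ 0


end CycleClass

end Equiv.Perm

namespace Matrix

theorem rank_eq_card_width_iff {K m n : Type*} [Field K] [Fintype n]
    (M : Matrix m n K) : M.rank = Fintype.card n ↔ ∀ x, M *ᵥ x = 0 → x = 0 := by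
  have h := LinearMap.finrank_range_add_finrank_ker M.mulVecLin
  rw [Module.finrank_fintype_fun_eq_card] at h
  rw [← ker_mulVecLin_eq_bot_iff, ← Submodule.finrank_eq_zero, rank]
  omega

theorem mul_pow_mulVec_eq_zero {R ρ ι : Type*} [CommRing R] [Nontrivial R] [Fintype ι]
    [DecidableEq ι] (B : Matrix ρ ι R) (A : Matrix ι ι R) {x : ι → R}
    (h : ∀ k < Fintype.card ι, (B * A ^ k) *ᵥ x = 0) (m : ℕ) : (B * A ^ m) *ᵥ x = 0 := by
  rcases isEmpty_or_nonempty ι with _ | _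
  · simp [Subsingleton.elim x 0]
  have hdeg : (Polynomial.X ^ m %ₘ A.charpoly).natDegree < Fintype.card ι := by
    have hne : A.charpoly ≠ 1 := fun h1 => by
      have := A.charpoly_natDegree_eq_dim
      rw [h1, Polynomial.natDegree_one] at this
      exact Fintype.card_ne_zero this.symm
    simpa [A.charpoly_natDegree_eq_dim] using
      Polynomial.natDegree_modByMonic_lt (Polynomial.X ^ m) A.charpoly_monic hne
  rw [A.pow_eq_aeval_mod_charpoly, Polynomial.aeval_eq_sum_range, Matrix.mul_sum,
    Matrix.sum_mulVec]
  refine Finset.sum_eq_zero fun i hi => ?_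
  rw [Matrix.mul_smul, Matrix.smul_mulVec, h i (by simp at hi; omega), smul_zero]

theorem exists_eigenvector_mulVec_eq_zero {L ρ ι : Type*} [Field L] [IsAlgClosed L]
    [Fintype ι] [DecidableEq ι] (B : Matrix ρ ι L) (A : Matrix ι ι L) {x : ι → L} (hx : x ≠ 0)
    (h : ∀ m, (B * A ^ m) *ᵥ x = 0) :
    ∃ (μ : L) (u : ι → L), u ≠ 0 ∧ A *ᵥ u = μ • u ∧ B *ᵥ u = 0 := by
  let K : Submodule L (ι → L) := ⨅ m : ℕ, LinearMap.ker (B * A ^ m).mulVecLin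
  have hmem : ∀ y, y ∈ K ↔ ∀ m, (B * A ^ m) *ᵥ y = 0 := by simp [K, Submodule.mem_iInf]
  have hinv : ∀ y ∈ K, A.mulVecLin y ∈ K := by
    intro y hy
    rw [hmem] at hy ⊢
    intro m
    rw [mulVecLin_apply, mulVec_mulVec, Matrix.mul_assoc, ← pow_succ]
    exact hy (m + 1)
  have : Nontrivial K := nontrivial_of_ne ⟨x, (hmem x).2 h⟩ 0 fun h0 => hx (congrArg Subtype.val h0)
  obtain ⟨μ, hμ⟩ := Module.End.exists_eigenvalue (A.mulVecLin.restrict hinv)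
  obtain ⟨u, hu, hu0⟩ := hμ.exists_hasEigenvector
  refine ⟨μ, u, fun h0 => hu0 (Subtype.ext h0), ?_, by simpa using (hmem u).1 u.2 0⟩
  simpa using congrArg Subtype.val (Module.End.mem_eigenspace_iff.mp hu)

end Matrix

theorem rank_obsMatrix_eq_of_forall_eigenvector {n : ℕ} {ρ : Type*} [Fintype ρ]
    (A : Matrix (Fin n) (Fin n) ℝ) (H : Matrix ρ (Fin n) ℝ)
    (h : ∀ (μ : ℂ) (v : Fin n → ℂ), v ≠ 0 → A.map (algebraMap ℝ ℂ) *ᵥ v = μ • v →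
      H.map (algebraMap ℝ ℂ) *ᵥ v ≠ 0) :
    (obsMatrix A H).rank = n := by
  have hcard := (obsMatrix A H).rank_eq_card_width_iff
  rw [Fintype.card_fin] at hcard
  refine hcard.2 fun x hx => ?_
  by_contra hx0
  have hlt : ∀ k < Fintype.card (Fin n), (H * A ^ k) *ᵥ x = 0 := fun k hk => by
    funext i
    simpa [obsMatrix, mulVec, dotProduct] using congrFun hx (⟨k, by simpa using hk⟩, i)
  set f := algebraMap ℝ ℂ
  have hall : ∀ m, (H.map f * A.map f ^ m) *ᵥ (f ∘ x) = 0 := fun m => by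
    funext i
    rw [← Matrix.map_pow, ← Matrix.map_mul, ← RingHom.map_mulVec, H.mul_pow_mulVec_eq_zero A hlt m]
    simp
  obtain ⟨μ, u, hu, heig, hHu⟩ := (H.map f).exists_eigenvector_mulVec_eq_zero (A.map f)
    (fun h0 => hx0 (funext fun i => f.injective (by simpa using congrFun h0 i))) hall
  exact h μ u hu heig hHu

theorem rank_obsMatrix_ne_of_invariant {n : ℕ} {ρ : Type*} [Fintype ρ]
    (A : Matrix (Fin n) (Fin n) ℝ) (H : Matrix ρ (Fin n) ℝ) {S : Set (Fin n)} {j : Fin n}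
    (hj : j ∈ S) (hA : ∀ i k, k ∈ S → A i k ≠ 0 → i ∈ S) (hH : ∀ r k, k ∈ S → H r k = 0) :
    (obsMatrix A H).rank ≠ n := by
  have hvanish : ∀ (m : ℕ) r, ∀ k ∈ S, (H * A ^ m : Matrix ρ (Fin n) ℝ) r k = 0 := by
    intro m
    induction m with
    | zero => simpa using hH
    | succ m ih =>
      intro r k hk
      rw [pow_succ, ← Matrix.mul_assoc, mul_apply]
      refine Finset.sum_eq_zero fun l _ => ?_
      by_cases hlk : A l k = 0
      · rw [hlk, mul_zero]
      · rw [ih r l (hA l k hk hlk), zero_mul]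
  intro hrank
  have hcard := (obsMatrix A H).rank_eq_card_width_iff
  rw [Fintype.card_fin] at hcard
  have hker : obsMatrix A H *ᵥ Pi.single j 1 = 0 := by
    funext p
    simp [obsMatrix, hvanish p.1 p.2 j hj]
  simpa using congrFun (hcard.1 hrank _ hker) j

namespace Relation

variable {α : Type*} (r : α → α → Prop) (R : Set α)

def reachesWithin : ℕ → Set α
  | 0 => R
  | k + 1 => R ∪ {x | ∃ y, r x y ∧ y ∈ reachesWithin k}

theorem exists_rank_of_forall_reflTransGen (h : ∀ x, ∃ m ∈ R, ReflTransGen r x m) :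
    ∃ rank : α → ℕ, (∀ x, rank x = 0 → x ∈ R) ∧ ∀ x, 0 < rank x → ∃ y, r x y ∧ rank y < rank x := by
  classical
  have hex : ∀ x, ∃ k, x ∈ reachesWithin r R k := by
    intro x
    obtain ⟨m, hm, hxm⟩ := h x
    induction hxm using ReflTransGen.head_induction_on with
    | refl => exact ⟨0, hm⟩
    | head hxy _ ih =>
      obtain ⟨k, hk⟩ := ih
      exact ⟨k + 1, Or.inr ⟨_, hxy, hk⟩⟩
  have hR : ∀ k, R ⊆ reachesWithin r R k
    | 0 => subset_rfl
    | _ + 1 => Set.subset_union_left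
  refine ⟨fun x => Nat.find (hex x), fun x hx => ?_, fun x hx => ?_⟩
  · have hmem := Nat.find_spec (hex x)
    rwa [show Nat.find (hex x) = 0 from hx] at hmem
  · dsimp only at hx ⊢
    obtain ⟨k, hk⟩ := Nat.exists_eq_add_one_of_ne_zero hx.ne'
    have hmem := Nat.find_spec (hex x)
    have hnot := Nat.find_min (hex x) (show k < Nat.find (hex x) by omega)
    rw [hk] at hmem
    rcases hmem with hxR | ⟨y, hxy, hy⟩
    · exact absurd (hR k hxR) hnot
    · exact ⟨y, hxy, (Nat.find_min' _ hy).trans_lt (by omega)⟩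

end Relation


section SCC

variable {V : Type*} {E : V → V → Prop}

theorem isSCC_setOf_sameSCC (E : V → V → Prop) (y : V) : IsSCC E {u | SameSCC E u y} :=
  ⟨⟨y, .refl, .refl⟩, fun _ hu _ hv => ⟨hu.1.trans hv.2, hv.1.trans hu.2⟩,
    fun _ _ hv huv => ⟨huv.1.trans hv.1, hv.2.trans huv.2⟩⟩

theorem IsSCC.eq_of_mem {S S' : Set V} (hS : IsSCC E S) (hS' : IsSCC E S') {u : V} (hu : u ∈ S)
    (hu' : u ∈ S') : S = S' :=
  Set.ext fun w => ⟨fun hw => hS'.2.2 w u hu' (hS.2.1 w hw u hu),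
    fun hw => hS.2.2 w u hu (hS'.2.1 w hw u hu')⟩

theorem exists_isParentSCC_reflTransGen [Finite V] (E : V → V → Prop) (x : V) :
    ∃ S, IsParentSCC E S ∧ ∃ y ∈ S, Relation.ReflTransGen E x y := by
  let reach : V → Set V := fun z => {w | Relation.ReflTransGen E z w}
  have : Nonempty {y // Relation.ReflTransGen E x y} := ⟨⟨x, .refl⟩⟩
  obtain ⟨⟨y, hxy⟩, hmin⟩ := Finite.exists_min fun y : {y // Relation.ReflTransGen E x y} =>
    (reach y.1).ncard
  refine ⟨_, ⟨isSCC_setOf_sameSCC E y, fun u hu w huw => ?_⟩, y, ⟨.refl, .refl⟩, hxy⟩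
  have hyw : Relation.ReflTransGen E y w := hu.2.tail huw
  have hsub : reach w ⊆ reach y := fun z hz => hyw.trans hz
  have heq : reach w = reach y :=
    Set.eq_of_subset_of_ncard_le hsub (hmin ⟨w, hxy.trans hyw⟩) (Set.toFinite _)
  have hwy : y ∈ reach w := heq ▸ Relation.ReflTransGen.refl
  exact ⟨hwy, hyw⟩

end SCC

theorem exists_perm_of_termRank_eq {m : Type*} [Fintype m] (A : Matrix m m Bool)
    (h : termRank A = Fintype.card m) : ∃ σ : Equiv.Perm m, ∀ j, A (σ j) j = true := by
  let s : Set ℕ := {k | ∃ (r : Fin k → m) (c : Fin k → m),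
    Function.Injective r ∧ Function.Injective c ∧ ∀ i, A (r i) (c i) = true}
  have hne : s.Nonempty :=
    ⟨0, Fin.elim0, Fin.elim0, fun a => a.elim0, fun a => a.elim0, fun i => i.elim0⟩
  have hbdd : BddAbove s :=
    ⟨Fintype.card m, fun k ⟨r, _, hr, _⟩ => by simpa using Fintype.card_le_of_injective r hr⟩
  have hmem : termRank A ∈ s := Nat.sSup_mem hne hbdd
  obtain ⟨r, c, hr, hc, hrc⟩ := h ▸ hmem
  let er := Equiv.ofBijective r ((Fintype.bijective_iff_injective_and_card r).2 ⟨hr, by simp⟩)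
  let ec := Equiv.ofBijective c ((Fintype.bijective_iff_injective_and_card c).2 ⟨hc, by simp⟩)
  refine ⟨ec.symm.trans er, fun j => ?_⟩
  have := hrc (ec.symm j)
  rwa [show c (ec.symm j) = j from ec.apply_symm_apply j] at this

open Equiv Perm

/-- `src O → tgt O` is the link edge leaving the cycle `O`; it is used only when `0 < level O`. -/
structure CycleForest {V : Type*} (σ : Perm V) where
  weight : σ.Cycles → ℝ
  level : σ.Cycles → ℕ
  src : σ.Cycles → V
  tgt : σ.Cycles → V
  weight_pos : ∀ O, 0 < weight O
  weight_injective : Function.Injective weight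
  cycleClass_src : ∀ O, σ.cycleClass (src O) = O
  level_tgt_le : ∀ O, level (σ.cycleClass (tgt O)) ≤ level O
  level_tgt_lt : ∀ O, 0 < level O → level (σ.cycleClass (tgt O)) < level O

namespace CycleForest

open scoped Classical

variable {V : Type*} {σ : Perm V} (F : CycleForest σ)

def IsLink (j i : V) : Prop :=
  0 < F.level (σ.cycleClass j) ∧ F.src (σ.cycleClass j) = j ∧ i = F.tgt (σ.cycleClass j)

noncomputable def toMatrix : Matrix V V ℝ := fun i j =>
  (if i = σ j then F.weight (σ.cycleClass j) else 0) + if F.IsLink j i then 1 else 0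

def next (O : σ.Cycles) : σ.Cycles := σ.cycleClass (F.tgt O)

variable {F}

theorem toMatrix_ne_zero {i j : V} (h : F.toMatrix i j ≠ 0) : i = σ j ∨ F.IsLink j i := by
  by_contra! hc
  simp [toMatrix, hc.1, hc.2] at h

theorem level_next_le (O : σ.Cycles) : F.level (F.next O) ≤ F.level O :=
  F.level_tgt_le O

theorem level_next_lt {O : σ.Cycles} (hO : 0 < F.level O) : F.level (F.next O) < F.level O :=
  F.level_tgt_lt O hO

theorem level_lt_of_isLink {j i : V} (h : F.IsLink j i) :
    F.level (σ.cycleClass i) < F.level (σ.cycleClass j) := by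
  obtain ⟨hpos, -, rfl⟩ := h
  exact level_next_lt hpos

theorem level_next_iterate_antitone (O : σ.Cycles) : Antitone fun k => F.level (F.next^[k] O) :=
  antitone_nat_of_succ_le fun k => by
    rw [Function.iterate_succ_apply']
    exact level_next_le _

theorem eq_of_next_iterate_succ_eq {O : σ.Cycles} {k l : ℕ}
    (h : F.next^[k + 1] O = F.next^[l + 1] O) (hk : 0 < F.level (F.next^[k] O))
    (hl : 0 < F.level (F.next^[l] O)) : k = l := by
  have key : ∀ {k l}, F.next^[k + 1] O = F.next^[l + 1] O → k < l →
      0 < F.level (F.next^[l] O) → False := by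
    intro k l h hkl hl
    have hle := level_next_iterate_antitone (F := F) O (show k + 1 ≤ l by omega)
    have hlt := level_next_lt hl
    rw [← Function.iterate_succ_apply' F.next, ← h] at hlt
    exact absurd hle (not_le.2 hlt)
  rcases lt_trichotomy k l with hkl | hkl | hkl
  · exact (key h hkl hl).elim
  · exact hkl
  · exact (key h.symm hkl hk).elim

theorem exists_level_next_iterate_eq_zero (O : σ.Cycles) : ∃ k, F.level (F.next^[k] O) = 0 := by
  by_contra! hpos
  have hbound : ∀ k, F.level (F.next^[k] O) + k ≤ F.level O := by
    intro k
    induction k with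
    | zero => simp
    | succ k ih =>
      have := level_next_lt (Nat.pos_of_ne_zero (hpos k))
      rw [Function.iterate_succ_apply']
      omega
  have := hbound (F.level O + 1)
  omega

theorem IsLink.right_unique {j i i' : V} (h : F.IsLink j i) (h' : F.IsLink j i') : i = i' :=
  h.2.2.trans h'.2.2.symm

theorem isLink_src_tgt {O : σ.Cycles} (hO : 0 < F.level O) : F.IsLink (F.src O) (F.tgt O) := by
  refine ⟨?_, ?_, ?_⟩ <;> rw [F.cycleClass_src]
  exact hO

variable [Fintype V] {μ : ℂ} {v : V → ℂ}

theorem mul_apply_eq_of_mulVec_eq_smul (hv : F.toMatrix.map (algebraMap ℝ ℂ) *ᵥ v = μ • v) (i : V) :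
    μ * v i = F.weight (σ.cycleClass i) * v (σ⁻¹ i) + ∑ j with F.IsLink j i, v j := by
  rw [← smul_eq_mul, ← Pi.smul_apply, ← hv]
  simp only [toMatrix, mulVec, dotProduct, Matrix.map_apply, Complex.coe_algebraMap,
    Complex.ofReal_add, apply_ite Complex.ofReal, Complex.ofReal_zero, Complex.ofReal_one, add_mul,
    ite_mul, zero_mul, one_mul, Finset.sum_add_distrib, Finset.sum_filter]
  congr 1
  simp_rw [← Perm.inv_eq_iff_eq, Finset.sum_ite_eq, Finset.mem_univ, if_true, cycleClass_inv_apply]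

theorem norm_eq_weight_of_forall_isLink (hv : F.toMatrix.map (algebraMap ℝ ℂ) *ᵥ v = μ • v)
    {O : σ.Cycles} (hO : σ.IsActive v O)
    (hin : ∀ i j, σ.cycleClass i = O → F.IsLink j i → v j = 0) :
    ‖μ‖ = F.weight O ∧ ∀ i, σ.cycleClass i = O → v i ≠ 0 := by
  obtain ⟨t, rfl, ht⟩ := hO
  have hrel : ∀ i, σ.SameCycle t i → μ * v i = F.weight (σ.cycleClass t) * v (σ⁻¹ i) := by
    intro i hi
    have hit := cycleClass_eq_cycleClass.2 hi.symm
    rw [mul_apply_eq_of_mulVec_eq_smul hv i, hit,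
      Finset.sum_eq_zero fun j hj => hin i j hit (Finset.mem_filter.1 hj).2, add_zero]
  have hw : (F.weight (σ.cycleClass t) : ℂ) ≠ 0 := by exact_mod_cast (F.weight_pos _).ne'
  have hpow := pow_sub_pow_mul_apply_eq (s := 0) (fun i hi _ => hrel i hi)
    ((hrel t (SameCycle.refl σ t)).trans (add_zero _).symm)
  rw [mul_zero, mul_eq_zero, sub_eq_zero, or_iff_left ht] at hpow
  refine ⟨?_, fun i hi => apply_ne_zero_of_sameCycle (fun i hi _ => hrel i hi) hw ht
    (cycleClass_eq_cycleClass.1 hi).symm⟩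
  have hnorm := congrArg norm hpow
  rw [norm_pow, norm_pow, Complex.norm_real, Real.norm_of_nonneg (F.weight_pos _).le] at hnorm
  exact (pow_left_inj₀ (norm_nonneg _) (F.weight_pos _).le (minimalPeriod_pos σ t).ne').1 hnorm

theorem forall_ne_zero_of_isLink (hv : F.toMatrix.map (algebraMap ℝ ℂ) *ᵥ v = μ • v)
    (hμ : μ ≠ 0) {a t : V} (hat : F.IsLink a t) (ha : v a ≠ 0)
    (huniq : ∀ i j, σ.cycleClass i = σ.cycleClass t → F.IsLink j i → v j ≠ 0 → j = a) :
    ∀ i, σ.cycleClass i = σ.cycleClass t → v i ≠ 0 := by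
  have hrel : ∀ i, σ.SameCycle t i →
      μ * v i = F.weight (σ.cycleClass t) * v (σ⁻¹ i) + if i = t then v a else 0 := by
    intro i hi
    have hit := cycleClass_eq_cycleClass.2 hi.symm
    rw [mul_apply_eq_of_mulVec_eq_smul hv i, hit]
    congr 1
    split_ifs with h
    · subst h
      refine Finset.sum_eq_single a (fun j hj hja => ?_) fun h => (h (by simpa using hat)).elim
      by_contra hj0
      exact hja (huniq _ j hit (Finset.mem_filter.1 hj).2 hj0)
    · refine Finset.sum_eq_zero fun j hj => ?_
      by_contra hj0
      have hji := (Finset.mem_filter.1 hj).2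
      exact h (hji.right_unique (huniq i j hit hji hj0 ▸ hat))
  have hw : (F.weight (σ.cycleClass t) : ℂ) ≠ 0 := by exact_mod_cast (F.weight_pos _).ne'
  have hrel' : ∀ i, σ.SameCycle t i → i ≠ t → μ * v i = F.weight (σ.cycleClass t) * v (σ⁻¹ i) :=
    fun i hi hit => by rw [hrel i hi, if_neg hit, add_zero]
  have hpow := pow_sub_pow_mul_apply_eq (s := v a) hrel'
    (by simpa using hrel t (SameCycle.refl σ t))
  have ht : v t ≠ 0 := fun h0 => by
    rw [h0, mul_zero] at hpow
    exact mul_ne_zero (pow_ne_zero _ hμ) ha hpow.symm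
  exact fun i hi => apply_ne_zero_of_sameCycle hrel' hw ht (cycleClass_eq_cycleClass.1 hi).symm

theorem exists_eq_next_iterate_of_isActive (hv : F.toMatrix.map (algebraMap ℝ ℂ) *ᵥ v = μ • v)
    {O₀ : σ.Cycles} (hO₀ : ‖μ‖ = F.weight O₀) {O : σ.Cycles} (hO : σ.IsActive v O) :
    ∃ k, O = F.next^[k] O₀ := by
  by_contra! hout
  have : Nonempty {B // σ.IsActive v B ∧ ∀ k, B ≠ F.next^[k] O₀} := ⟨⟨O, hO, hout⟩⟩
  obtain ⟨⟨B, hB, hBout⟩, hBmax⟩ := Finite.exists_max fun B : {B // σ.IsActive v B ∧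
    ∀ k, B ≠ F.next^[k] O₀} => F.level B.1
  refine hBout 0 (F.weight_injective ?_)
  refine ((norm_eq_weight_of_forall_isLink hv hB fun i j hi hji => ?_).1).symm.trans hO₀
  by_contra hj
  by_cases hjchain : ∃ k, σ.cycleClass j = F.next^[k] O₀
  · obtain ⟨k, hk⟩ := hjchain
    refine hBout (k + 1) ?_
    rw [← hi, Function.iterate_succ_apply', ← hk, hji.2.2]
    rfl
  · have hle := hBmax ⟨_, ⟨j, rfl, hj⟩, not_exists.1 hjchain⟩
    have hlt := level_lt_of_isLink hji
    rw [hi] at hlt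
    exact absurd hle (not_le.2 hlt)

theorem exists_norm_eq_weight_forall_ne_zero (hv : F.toMatrix.map (algebraMap ℝ ℂ) *ᵥ v = μ • v)
    (hv0 : v ≠ 0) : ∃ O, ‖μ‖ = F.weight O ∧ ∀ i, σ.cycleClass i = O → v i ≠ 0 := by
  obtain ⟨x, hx⟩ := Function.ne_iff.1 hv0
  have : Nonempty {O // σ.IsActive v O} := ⟨⟨_, x, rfl, hx⟩⟩
  obtain ⟨⟨O, hO⟩, hOmax⟩ := Finite.exists_max fun O : {O // σ.IsActive v O} => F.level O.1
  refine ⟨O, norm_eq_weight_of_forall_isLink hv hO fun i j hi hji => ?_⟩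
  by_contra hj
  have hle := hOmax ⟨_, j, rfl, hj⟩
  have hlt := level_lt_of_isLink hji
  rw [hi] at hlt
  exact absurd hle (not_le.2 hlt)

theorem exists_level_eq_zero_forall_ne_zero (hv : F.toMatrix.map (algebraMap ℝ ℂ) *ᵥ v = μ • v)
    (hv0 : v ≠ 0) : ∃ O, F.level O = 0 ∧ ∀ i, σ.cycleClass i = O → v i ≠ 0 := by
  obtain ⟨O₀, hnorm, hO₀⟩ := exists_norm_eq_weight_forall_ne_zero hv hv0
  have hμ : μ ≠ 0 := by
    rintro rfl
    exact (F.weight_pos O₀).ne (by simpa using hnorm)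
  -- Every cycle met by `v` lies on the chain `O₀, next O₀, …`, whose levels strictly decrease,
  -- so each cycle of the chain receives exactly one nonzero input.
  have hchain : ∀ k, (∀ l < k, 0 < F.level (F.next^[l] O₀)) →
      ∀ i, σ.cycleClass i = F.next^[k] O₀ → v i ≠ 0 := by
    intro k
    induction k with
    | zero => exact fun _ => hO₀
    | succ k ih =>
      intro hpos
      have hk := hpos k k.lt_succ_self
      have ha := ih (fun l hl => hpos l (by omega)) _ (F.cycleClass_src _)
      rw [Function.iterate_succ_apply']
      refine forall_ne_zero_of_isLink hv hμ (isLink_src_tgt hk) ha fun i j hi hji hj => ?_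
      obtain ⟨l, hl⟩ := exists_eq_next_iterate_of_isActive hv hnorm ⟨j, rfl, hj⟩
      have hlk : l = k := by
        refine eq_of_next_iterate_succ_eq ?_ (hl ▸ hji.1) hk
        rw [Function.iterate_succ_apply', Function.iterate_succ_apply', ← hl]
        exact (congrArg σ.cycleClass hji.2.2).symm.trans hi
      rw [← hji.2.1, hl, hlk]
  have hex := exists_level_next_iterate_eq_zero (F := F) O₀
  exact ⟨_, Nat.find_spec hex, hchain _ fun l hl => Nat.pos_of_ne_zero (Nat.find_min hex hl)⟩

end CycleForest

theorem exists_cycleForest {n : ℕ} (𝒜 : Matrix (Fin n) (Fin n) Bool) (σ : Perm (Fin n))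
    (hσ : ∀ j, 𝒜 (σ j) j = true) (R : Set (Fin n))
    (hreach : ∀ x, ∃ m ∈ R, Relation.ReflTransGen (digraphRel 𝒜) x m) :
    ∃ F : CycleForest σ, (∀ i j, 𝒜 i j = false → F.toMatrix i j = 0) ∧
      ∀ O, F.level O = 0 → ∃ m ∈ R, σ.cycleClass m = O := by
  let step : σ.Cycles → σ.Cycles → Prop := fun O P =>
    ∃ a b, σ.cycleClass a = O ∧ σ.cycleClass b = P ∧ digraphRel 𝒜 a b
  have hreach' : ∀ O : σ.Cycles, ∃ P ∈ {P | ∃ m ∈ R, σ.cycleClass m = P},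
      Relation.ReflTransGen step O P := by
    refine Quotient.ind fun x => ?_
    obtain ⟨m, hm, hxm⟩ := hreach x
    exact ⟨_, ⟨m, hm, rfl⟩, hxm.lift σ.cycleClass fun a b hab => ⟨a, b, rfl, rfl, hab⟩⟩
  obtain ⟨rank, hrank0, hrank⟩ := Relation.exists_rank_of_forall_reflTransGen step _ hreach'
  have hlink : ∀ O, ∃ a b, σ.cycleClass a = O ∧ rank (σ.cycleClass b) ≤ rank O ∧
      (0 < rank O → 𝒜 b a = true ∧ rank (σ.cycleClass b) < rank O) := by
    intro O
    rcases Nat.eq_zero_or_pos (rank O) with h0 | hpos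
    · refine ⟨O.out, O.out, Quotient.out_eq O, ?_, fun h => absurd h (by omega)⟩
      rw [cycleClass, Quotient.out_eq]
    · obtain ⟨P, ⟨a, b, rfl, rfl, hab⟩, hlt⟩ := hrank O hpos
      exact ⟨a, b, rfl, hlt.le, fun _ => ⟨hab, hlt⟩⟩
  choose src tgt hsrc hle hlt using hlink
  refine ⟨{ weight := fun O => ((O.out : ℕ) : ℝ) + 1
            level := rank
            src := src
            tgt := tgt
            weight_pos := fun O => by positivity
            weight_injective := fun O P h => Quotient.out_inj.1 (Fin.ext (by simpa using h))
            cycleClass_src := hsrc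
            level_tgt_le := hle
            level_tgt_lt := fun O hO => (hlt O hO).2 }, fun i j hij => ?_, hrank0⟩
  by_contra hne
  rcases CycleForest.toMatrix_ne_zero hne with rfl | ⟨hpos, hsrcj, rfl⟩
  · simp [hσ] at hij
  · dsimp only at hpos hsrcj hij
    have h𝒜 := (hlt _ hpos).1
    rw [hsrcj, hij] at h𝒜
    exact Bool.false_ne_true h𝒜

theorem exists_measured_of_structurallyObservable {n : ℕ} {ρ : Type*} [Fintype ρ]
    {𝒜 : Matrix (Fin n) (Fin n) Bool} {ℋ : Matrix ρ (Fin n) Bool}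
    (h : StructurallyObservable 𝒜 ℋ) {S : Set (Fin n)} (hS : IsParentSCC (digraphRel 𝒜) S) :
    ∃ u ∈ S, Measured ℋ u := by
  obtain ⟨A, H, hA, hH, hrank⟩ := h
  by_contra! hS'
  obtain ⟨j, hj⟩ := hS.1.1
  refine rank_obsMatrix_ne_of_invariant A H hj (fun i k hk hik => hS.2 k hk i ?_)
    (fun r k hk => hH r k ?_) hrank
  · by_contra h𝒜
    exact hik (hA i k (by simpa [digraphRel] using h𝒜))
  · by_contra hℋ
    exact hS' k hk ⟨r, by simpa using hℋ⟩

theorem structurallyObservable_of_forall_isParentSCC {n : ℕ} {ρ : Type*} [Fintype ρ]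
    {𝒜 : Matrix (Fin n) (Fin n) Bool} {σ : Perm (Fin n)} (hσ : ∀ j, 𝒜 (σ j) j = true)
    {ℋ : Matrix ρ (Fin n) Bool} (hℋ : ∀ i, ∃! j, ℋ i j = true)
    (hmeas : ∀ S, IsParentSCC (digraphRel 𝒜) S → ∃ u ∈ S, Measured ℋ u) :
    StructurallyObservable 𝒜 ℋ := by
  have hreach : ∀ x, ∃ m ∈ {j | Measured ℋ j}, Relation.ReflTransGen (digraphRel 𝒜) x m := by
    intro x
    obtain ⟨S, hS, y, hy, hxy⟩ := exists_isParentSCC_reflTransGen (digraphRel 𝒜) x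
    obtain ⟨u, hu, hmu⟩ := hmeas S hS
    exact ⟨u, hmu, hxy.trans (hS.1.2.1 u hu y hy).2⟩
  obtain ⟨F, hpat, hroot⟩ := exists_cycleForest 𝒜 σ hσ _ hreach
  refine ⟨F.toMatrix, Matrix.of fun i j => if ℋ i j then 1 else 0, hpat, fun i j h => by simp [h],
    rank_obsMatrix_eq_of_forall_eigenvector _ _ fun μ v hv heig hHv => ?_⟩
  obtain ⟨O, hO, hOv⟩ := F.exists_level_eq_zero_forall_ne_zero heig hv
  obtain ⟨m, ⟨r, hrm⟩, hmO⟩ := hroot O hO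
  refine hOv m hmO ?_
  have hrow := congrFun hHv r
  simp only [mulVec, dotProduct, Matrix.map_apply, Pi.zero_apply] at hrow
  rwa [Finset.sum_eq_single m (fun j _ hjm => ?_) (by simp), Matrix.of_apply, if_pos hrm, map_one,
    one_mul] at hrow
  rw [Matrix.of_apply, if_neg fun h => hjm ((hℋ r).unique h hrm), map_zero, zero_mul]

section Counting

variable {n : ℕ} {E : Fin n → Fin n → Prop}

theorem card_isParentSCC_le {p : ℕ} {ℋ : Matrix (Fin p) (Fin n) Bool}
    (hℋ : ∀ i, ∃! j, ℋ i j = true) (hmeas : ∀ S, IsParentSCC E S → ∃ u ∈ S, Measured ℋ u) :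
    Nat.card {S // IsParentSCC E S} ≤ p := by
  choose u hu row hrow using fun S : {S // IsParentSCC E S} => hmeas S.1 S.2
  have hinj : Function.Injective row := fun S T hST => Subtype.ext <|
    S.2.1.eq_of_mem T.2.1 (hu S) ((hℋ (row T)).unique (hST ▸ hrow S) (hrow T) ▸ hu T)
  simpa using Nat.card_le_card_of_injective row hinj

theorem exists_measured_in_each_isParentSCC :
    ∃ ℋ : Matrix (Fin (Nat.card {S // IsParentSCC E S})) (Fin n) Bool,
      (∀ i, ∃! j, ℋ i j = true) ∧ ∀ S, IsParentSCC E S → ∃ u ∈ S, Measured ℋ u := by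
  let e := (Finite.equivFin {S // IsParentSCC E S}).symm
  choose rep hrep using fun S : {S // IsParentSCC E S} => S.2.1.1
  refine ⟨Matrix.of fun i j => decide (j = rep (e i)), fun i => ⟨rep (e i), by simp, fun j hj => by
    simpa using hj⟩, fun S hS => ⟨rep ⟨S, hS⟩, hrep ⟨S, hS⟩, e.symm ⟨S, hS⟩, by simp⟩⟩

end Counting

/-- If the term rank of `𝒜` equals `n`, a single-`1`-per-row output
pattern makes `(𝒜, ℋ)` structurally observable iff every parent SCC contains a
measured state; consequently the minimum number of such rows equals the number of
parent SCCs. -/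
theorem stmt8 {n : ℕ} (𝒜 : Matrix (Fin n) (Fin n) Bool)
    (hrank : termRank 𝒜 = n) :
    (∀ (p : ℕ) (ℋ : Matrix (Fin p) (Fin n) Bool), (∀ i, ∃! j, ℋ i j = true) →
      (StructurallyObservable 𝒜 ℋ ↔
        ∀ S : Set (Fin n), IsParentSCC (digraphRel 𝒜) S → ∃ u ∈ S, Measured ℋ u)) ∧
    IsLeast {p : ℕ | ∃ ℋ : Matrix (Fin p) (Fin n) Bool,
        (∀ i, ∃! j, ℋ i j = true) ∧ StructurallyObservable 𝒜 ℋ}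
      (Nat.card {S : Set (Fin n) // IsParentSCC (digraphRel 𝒜) S}) := by
  obtain ⟨σ, hσ⟩ := exists_perm_of_termRank_eq 𝒜 (by simpa using hrank)
  have hiff : ∀ (p : ℕ) (ℋ : Matrix (Fin p) (Fin n) Bool), (∀ i, ∃! j, ℋ i j = true) →
      (StructurallyObservable 𝒜 ℋ ↔
        ∀ S : Set (Fin n), IsParentSCC (digraphRel 𝒜) S → ∃ u ∈ S, Measured ℋ u) :=
    fun _ _ hℋ => ⟨fun h _ hS => exists_measured_of_structurallyObservable h hS,
      structurallyObservable_of_forall_isParentSCC hσ hℋ⟩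
  refine ⟨hiff, ?_, ?_⟩
  · obtain ⟨ℋ, hℋ, hmeas⟩ := exists_measured_in_each_isParentSCC (E := digraphRel 𝒜)
    exact ⟨ℋ, hℋ, (hiff _ ℋ hℋ).2 hmeas⟩
  · rintro p ⟨ℋ, hℋ, hobs⟩
    exact card_isParentSCC_le hℋ ((hiff p ℋ hℋ).1 hobs)
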